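/- arXiv:1304.4495 — 2 statements merged into one kernel-verified Lean document; each statement's English description precedes it below -/
import Mathlib

section
/- Let n ≥ 2 and g ≥ 1 be integers. Then, as rational numbers, ((n² - n - 2)·g)/(2·(n-1)²) ≤ (n-1)·g - n·⌊g/2⌋, and equality holds if and only if (n = 2 or n = 3) and g is even. -/
/-!
Write `g = 2q + r` with `r ∈ {0, 1}`. Clearing the denominator `2(n-1)²`, the right-hand side minus
the left-hand side becomes `n(n-2)(n-3)g + n(n-1)²r`. Both summands are nonnegative, since
`(n-2)(n-3)` is a product of consecutive integers, and they vanish simultaneously exactly when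
`n ∈ {2, 3}` and `r = 0`.
-/

def defect (n g : ℤ) : ℤ := n * ((n - 2) * (n - 3)) * g + n * (n - 1) ^ 2 * (g % 2)

lemma sub_two_mul_sub_three_nonneg (n : ℤ) : 0 ≤ (n - 2) * (n - 3) := by
  rcases le_or_gt n 2 with h | h <;> nlinarith

lemma defect_nonneg {n g : ℤ} (hn : 0 ≤ n) (hg : 0 ≤ g) : 0 ≤ defect n g := by
  unfold defect
  have := sub_two_mul_sub_three_nonneg n
  have := Int.emod_nonneg g two_ne_zero
  positivity

lemma defect_eq_zero_iff {n g : ℤ} (hn : 2 ≤ n) (hg : 1 ≤ g) :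
    defect n g = 0 ↔ (n = 2 ∨ n = 3) ∧ Even g := by
  have h23 := sub_two_mul_sub_three_nonneg n
  have hr := Int.emod_nonneg g two_ne_zero
  rw [defect, add_eq_zero_iff_of_nonneg (by positivity) (by positivity), Int.even_iff]
  have hn0 : n ≠ 0 := by omega
  have hn1 : n - 1 ≠ 0 := by omega
  have hg0 : g ≠ 0 := by omega
  simp only [mul_eq_zero, hn0, hg0, pow_eq_zero_iff two_ne_zero, hn1, false_or, or_false, sub_eq_zero]

lemma floor_intCast_div_two (g : ℤ) : ⌊(g : ℚ) / 2⌋ = g / 2 := by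
  simpa using Rat.floor_intCast_div_natCast g 2

lemma sub_eq_defect_div {n : ℤ} (g : ℤ) (hn : n ≠ 1) :
    ((n : ℚ) - 1) * g - n * ((g / 2 : ℤ) : ℚ) - ((n : ℚ) ^ 2 - n - 2) * g / (2 * ((n : ℚ) - 1) ^ 2)
      = defect n g / (2 * ((n : ℚ) - 1) ^ 2) := by
  have hn' : (n : ℚ) - 1 ≠ 0 := sub_ne_zero.mpr (by exact_mod_cast hn)
  have hg : (g : ℚ) = 2 * ((g / 2 : ℤ) : ℚ) + ((g % 2 : ℤ) : ℚ) := by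
    exact_mod_cast (Int.mul_ediv_add_emod g 2).symm
  field_simp
  rw [defect]
  push_cast
  rw [hg]
  ring

/-- Lemma 4.5: for integers n ≥ 2, g ≥ 1, as rationals
((n² - n - 2)·g)/(2(n-1)²) ≤ (n-1)g - n⌊g/2⌋, with equality iff (n = 2 or n = 3) and g even. -/
theorem stmt_0 (n g : ℤ) (hn : 2 ≤ n) (hg : 1 ≤ g) :
    (((n : ℚ)^2 - n - 2) * g) / (2 * ((n : ℚ) - 1)^2)
      ≤ ((n : ℚ) - 1) * g - n * (⌊(g : ℚ) / 2⌋ : ℚ) ∧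
    ((((n : ℚ)^2 - n - 2) * g) / (2 * ((n : ℚ) - 1)^2)
      = ((n : ℚ) - 1) * g - n * (⌊(g : ℚ) / 2⌋ : ℚ) ↔ (n = 2 ∨ n = 3) ∧ Even g) := by
  have hgap := sub_eq_defect_div g (show n ≠ 1 by omega)
  have hden : (0 : ℚ) < 2 * ((n : ℚ) - 1) ^ 2 := by
    have : (1 : ℚ) < n := by exact_mod_cast hn
    nlinarith
  rw [floor_intCast_div_two, ← sub_nonneg, eq_comm, ← sub_eq_zero, hgap,
    div_eq_zero_iff, or_iff_left hden.ne', Int.cast_eq_zero, defect_eq_zero_iff hn hg]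
  exact ⟨div_nonneg (by exact_mod_cast defect_nonneg (by omega) (by omega)) hden.le, Iff.rfl⟩
end

section
/- Let n ≥ 3 and m be integers with 2 ≤ m ≤ n - 1, and let g ≥ 0 be a rational number. Then (n/m)·(2g + m - (m+2)·g/(2m)) ≥ g + n + ((n² - n - 2)·g)/(2·(n-1)²), with equality when m = n - 1. -/
/-- Cases (ii),(iii) of Lemma 4.2: for integers n ≥ 3, 2 ≤ m ≤ n - 1 and a rational g ≥ 0,
(n/m)(2g + m - (m+2)g/(2m)) ≥ g + n + (n²-n-2)g/(2(n-1)²), with equality when m = n-1. -/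
theorem stmt_17 (n m : ℤ) (hn : 3 ≤ n) (hm2 : 2 ≤ m) (hm : m ≤ n - 1)
    (g : ℚ) (hg : 0 ≤ g) :
    ((n : ℚ) / (m : ℚ)) * (2 * g + m - ((m : ℚ) + 2) * g / (2 * (m : ℚ)))
      ≥ g + n + (((n : ℚ)^2 - n - 2) * g) / (2 * ((n : ℚ) - 1)^2) ∧
    (m = n - 1 →
      ((n : ℚ) / (m : ℚ)) * (2 * g + m - ((m : ℚ) + 2) * g / (2 * (m : ℚ)))
        = g + n + (((n : ℚ)^2 - n - 2) * g) / (2 * ((n : ℚ) - 1)^2)) := by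
  have hmQ : (2 : ℚ) ≤ (m : ℚ) := by exact_mod_cast hm2
  have hnQ : (3 : ℚ) ≤ (n : ℚ) := by exact_mod_cast hn
  have hmnQ : (m : ℚ) ≤ (n : ℚ) - 1 := by
    have : ((m : ℚ)) ≤ ((n - 1 : ℤ) : ℚ) := by exact_mod_cast hm
    simpa using this
  have hm0 : (0 : ℚ) < (m : ℚ) := by linarith
  have hn1 : (0 : ℚ) < (n : ℚ) - 1 := by linarith
  constructor
  · rw [ge_iff_le, ← sub_nonneg]
    have hkey : ((n : ℚ) / (m : ℚ)) * (2 * g + m - ((m : ℚ) + 2) * g / (2 * (m : ℚ)))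
        - (g + n + (((n : ℚ)^2 - n - 2) * g) / (2 * ((n : ℚ) - 1)^2))
        = g * n * (((n:ℚ) - 1 - m) * (3 * ((n:ℚ)-1) * m - 2 * (((n:ℚ)-1) + m)))
          / (2 * (m:ℚ)^2 * ((n:ℚ)-1)^2) := by
      field_simp
      ring
    rw [hkey]
    apply div_nonneg _ (by positivity)
    apply mul_nonneg (mul_nonneg hg (by linarith))
    apply mul_nonneg (by linarith)
    nlinarith
  · intro h
    have hmn : (m : ℚ) = (n : ℚ) - 1 := by
      have : ((m : ℚ)) = ((n - 1 : ℤ) : ℚ) := by exact_mod_cast h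
      simpa using this
    rw [hmn]
    field_simp
    ring
end
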